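/- Consider the perturbed consensus iteration x^{(t+1)} = A^{(t)} x^{(t)} + ξ^{(t)} in ℝ^N, where each A^{(t)} is row-stochastic with all entries at least δ ∈ (0, 1/2], and the range of each perturbation satisfies range(ξ^{(t)}) → 0 as t → ∞ (range(v) := max_i v_i − min_i v_i). Then range(x^{(t)}) → 0, i.e., all coordinates reach consensus: |x_i^{(t)} − x_j^{(t)}| → 0 for all i, j. -/

import Mathlib

/-!
Each coordinate of `A x` is a convex combination of the coordinates of `x` giving weight at
least `δ` to the minimal and to the maximal one, so it lies at distance at least `δ · range x`
from both ends, and `range (A x) ≤ (1 - 2δ) range x`. As the range is subadditive,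
`r t := range (x t)` satisfies `r (t+1) ≤ (1 - 2δ) r t + range (ξ t)`, and a recursion of this
shape with a vanishing forcing term drives `r` to `0`.
-/

open Filter Topology Finset Matrix

section Spread

variable {ι : Type*} [Fintype ι] (hne : (univ : Finset ι).Nonempty)

/-- The paper's `range v = max v - min v`. -/
noncomputable def spread (v : ι → ℝ) : ℝ :=
  univ.sup' hne v - univ.inf' hne v

variable {hne}

lemma abs_sub_le_spread (v : ι → ℝ) (i j : ι) : |v i - v j| ≤ spread hne v := by
  have hi := le_sup' v (mem_univ i)
  have hi' := inf'_le v (mem_univ i)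
  have hj := le_sup' v (mem_univ j)
  have hj' := inf'_le v (mem_univ j)
  rw [abs_sub_le_iff, spread]
  constructor <;> linarith

lemma spread_nonneg (v : ι → ℝ) : 0 ≤ spread hne v := by
  obtain ⟨i, -⟩ := hne
  simpa using (abs_nonneg _).trans (abs_sub_le_spread v i i)

lemma spread_add_le (v w : ι → ℝ) : spread hne (v + w) ≤ spread hne v + spread hne w := by
  have hsup : univ.sup' hne (v + w) ≤ univ.sup' hne v + univ.sup' hne w :=
    sup'_le _ _ fun i hi => add_le_add (le_sup' v hi) (le_sup' w hi)
  have hinf : univ.inf' hne v + univ.inf' hne w ≤ univ.inf' hne (v + w) :=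
    le_inf' _ _ fun i hi => add_le_add (inf'_le v hi) (inf'_le w hi)
  simp only [spread]
  linarith

lemma mul_le_sum_mul_of_le {δ : ℝ} {a u : ι → ℝ} (hδ : 0 ≤ δ) (ha : ∀ j, δ ≤ a j)
    (hu : ∀ j, 0 ≤ u j) (k : ι) : δ * u k ≤ ∑ j, a j * u j :=
  (mul_le_mul_of_nonneg_right (ha k) (hu k)).trans <|
    single_le_sum (f := fun j => a j * u j)
      (fun j _ => mul_nonneg (hδ.trans (ha j)) (hu j)) (mem_univ k)

lemma spread_mulVec_le {δ : ℝ} (A : Matrix ι ι ℝ) (v : ι → ℝ) (hδ : 0 ≤ δ)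
    (hlow : ∀ i k, δ ≤ A i k) (hrow : ∀ i, ∑ k, A i k = 1) :
    spread hne (A *ᵥ v) ≤ (1 - 2 * δ) * spread hne v := by
  set M := univ.sup' hne v
  set m := univ.inf' hne v
  obtain ⟨kmin, -, hkmin⟩ := exists_mem_eq_inf' hne v
  obtain ⟨kmax, -, hkmax⟩ := exists_mem_eq_sup' hne v
  have hupper (i : ι) : (A *ᵥ v) i ≤ M - δ * (M - m) := by
    have := mul_le_sum_mul_of_le hδ (hlow i) (u := fun k => M - v k)
      (fun k => sub_nonneg.2 (le_sup' v (mem_univ k))) kmin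
    simp only [mul_sub, sum_sub_distrib, ← sum_mul, hrow i, one_mul, ← hkmin] at this
    change ∑ k, A i k * v k ≤ _
    linarith
  have hlower (i : ι) : m + δ * (M - m) ≤ (A *ᵥ v) i := by
    have := mul_le_sum_mul_of_le hδ (hlow i) (u := fun k => v k - m)
      (fun k => sub_nonneg.2 (inf'_le v (mem_univ k))) kmax
    simp only [mul_sub, sum_sub_distrib, ← sum_mul, hrow i, one_mul, ← hkmax] at this
    change _ ≤ ∑ k, A i k * v k
    linarith
  have hsup := sup'_le hne (A *ᵥ v) fun i _ => hupper i
  have hinf := le_inf' hne (A *ᵥ v) fun i _ => hlower i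
  rw [spread, spread]
  linarith

end Spread

lemma le_pow_mul_add_of_le_mul_add {u : ℕ → ℝ} {c η : ℝ} {T : ℕ} (hc : 0 ≤ c) (hη : 0 ≤ η)
    (hrec : ∀ n ≥ T, u (n + 1) ≤ c * u n + (1 - c) * η) (n : ℕ) :
    u (T + n) ≤ c ^ n * u T + η := by
  induction n with
  | zero => simpa using hη
  | succ n ih =>
    calc u (T + (n + 1)) ≤ c * u (T + n) + (1 - c) * η := hrec (T + n) (Nat.le_add_right T n)
      _ ≤ c * (c ^ n * u T + η) + (1 - c) * η := by gcongr
      _ = c ^ (n + 1) * u T + η := by ring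

lemma tendsto_zero_of_le_mul_add {u e : ℕ → ℝ} {c : ℝ} (hc0 : 0 ≤ c) (hc1 : c < 1)
    (hu : ∀ n, 0 ≤ u n) (hrec : ∀ n, u (n + 1) ≤ c * u n + e n)
    (he : Tendsto e atTop (𝓝 0)) : Tendsto u atTop (𝓝 0) := by
  refine Metric.tendsto_atTop.2 fun ε hε => ?_
  have hη : 0 < (1 - c) * (ε / 2) := mul_pos (sub_pos.2 hc1) (half_pos hε)
  obtain ⟨T, hT⟩ := eventually_atTop.1 (he.eventually (ge_mem_nhds hη))
  have hbound := le_pow_mul_add_of_le_mul_add (u := u) (η := ε / 2) hc0 (half_pos hε).le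
    fun n hn => (hrec n).trans (add_le_add_right (hT n hn) _)
  have hgeo : Tendsto (fun n => c ^ n * u T) atTop (𝓝 0) := by
    simpa using (tendsto_pow_atTop_nhds_zero_of_lt_one hc0 hc1).mul_const (u T)
  obtain ⟨M, hM⟩ := eventually_atTop.1 (hgeo.eventually (gt_mem_nhds (half_pos hε)))
  refine ⟨T + M, fun n hn => ?_⟩
  obtain ⟨k, rfl⟩ := Nat.exists_eq_add_of_le (le_trans (Nat.le_add_right T M) hn)
  rw [Real.dist_eq, sub_zero, abs_of_nonneg (hu _)]
  linarith [hbound k, hM k (by omega)]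

theorem perturbed_consensus_iteration_reaches_consensus
    {N : ℕ} (hne : (Finset.univ : Finset (Fin N)).Nonempty)
    (A : ℕ → Matrix (Fin N) (Fin N) ℝ)
    (x ξ : ℕ → Fin N → ℝ) (δ : ℝ)
    (hδ : 0 < δ) (hδ2 : δ ≤ 1 / 2)
    (hlow : ∀ t i k, δ ≤ A t i k)
    (hrow : ∀ t i, ∑ k, A t i k = 1)
    (hupd : ∀ t, x (t + 1) = (A t).mulVec (x t) + ξ t)
    (hξ : Tendsto (fun t => Finset.univ.sup' hne (ξ t) - Finset.univ.inf' hne (ξ t))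
            atTop (nhds 0)) :
    Tendsto (fun t => Finset.univ.sup' hne (x t) - Finset.univ.inf' hne (x t))
      atTop (nhds 0) ∧
    ∀ i j, Tendsto (fun t => |x t i - x t j|) atTop (nhds 0) := by
  have hrec (t : ℕ) :
      spread hne (x (t + 1)) ≤ (1 - 2 * δ) * spread hne (x t) + spread hne (ξ t) := by
    rw [hupd t]
    exact (spread_add_le _ _).trans
      (add_le_add_left (spread_mulVec_le (A t) (x t) hδ.le (hlow t) (hrow t)) _)
  have hconsensus : Tendsto (fun t => spread hne (x t)) atTop (𝓝 0) :=
    tendsto_zero_of_le_mul_add (by linarith) (by linarith) (fun t => spread_nonneg _) hrec hξ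
  exact ⟨hconsensus, fun i j =>
    squeeze_zero (fun t => abs_nonneg _) (fun t => abs_sub_le_spread (x t) i j) hconsensus⟩
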